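/- Let G be a finite group and Γ = C₁ ∪ … ∪ C_t a union of distinct conjugacy classes, with g₁,…,g_r the elements of G \ Γ. Then the abelianisation of G_Γ = F/R_Γ is a free abelian group of rank t + r, with basis given by the classes of the conjugacy classes C₁,…,C_t and of the elements g₁,…,g_r. -/

import Mathlib

variable (G : Type*) [Group G]

/-- The canonical surjection from the free group `F` on the set `G` to `G`. -/
def tautProj : FreeGroup G →* G := FreeGroup.lift id

/-- `R = ker (F → G)`. -/
def Rrel : Subgroup (FreeGroup G) := (tautProj G).ker

/-- The commutator subgroup `[F, R]`. -/
def FRcomm : Subgroup (FreeGroup G) := ⁅(⊤ : Subgroup (FreeGroup G)), Rrel G⁆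

/-- The tautological lifts `â b̂ ĉ⁻¹ b̂⁻¹` of the conjugation relations, `a ∈ Γ`,
`c = b⁻¹ a b`. -/
def conjRels (Γ : Set G) : Set (FreeGroup G) :=
  {x | ∃ a ∈ Γ, ∃ b : G, x = FreeGroup.of a * FreeGroup.of b *
    (FreeGroup.of (b⁻¹ * a * b))⁻¹ * (FreeGroup.of b)⁻¹}

/-- `R_Γ`: the normal subgroup generated by `[F,R]` and the lifted conjugation relations. -/
def RGamma (Γ : Set G) : Subgroup (FreeGroup G) :=
  Subgroup.normalClosure ((FRcomm G : Set (FreeGroup G)) ∪ conjRels G Γ)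

instance (Γ : Set G) : (RGamma G Γ).Normal := Subgroup.normalClosure_normal

/-!
Because `[F, R] ≤ [F, F]`, abelianising `G_Γ` only imposes `â = ĉ` for conjugate `a, c ∈ Γ` on the
free abelian group on `G`. Sending `ĝ` to the basis vector of its conjugacy class (if `g ∈ Γ`) or of
`g` itself (if `g ∉ Γ`) defines a homomorphism `F → ℤ^(t + r)` killing `R_Γ`; it is inverse to the
map sending each basis vector to the class of any representative, as those classes all agree.
-/

namespace FreeGroup

variable {X ι : Type*}

noncomputable def fiberCount (p : X → ι) : FreeGroup X →* Multiplicative (ι →₀ ℤ) :=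
  FreeGroup.lift fun x => Multiplicative.ofAdd (Finsupp.single (p x) 1)

theorem exists_basis_abelianization_quotient (p : X → ι) (hp : Function.Surjective p)
    (N : Subgroup (FreeGroup X)) [N.Normal] (hN : N ≤ (fiberCount p).ker)
    (hfiber : ∀ x y, p x = p y →
      Abelianization.of (QuotientGroup.mk (s := N) (FreeGroup.of x)) =
        Abelianization.of (QuotientGroup.mk (FreeGroup.of y))) :
    ∃ b : Module.Basis ι ℤ (Additive (Abelianization (FreeGroup X ⧸ N))),
      ∀ x, b (p x) = Additive.ofMul (Abelianization.of (QuotientGroup.mk (FreeGroup.of x))) := by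
  let gen (x : X) : Additive (Abelianization (FreeGroup X ⧸ N)) :=
    Additive.ofMul (Abelianization.of (QuotientGroup.mk (FreeGroup.of x)))
  have gen_surjInv (x : X) : gen (Function.surjInv hp (p x)) = gen x :=
    congrArg Additive.ofMul (hfiber _ _ (Function.surjInv_eq hp _))
  let φ := MonoidHom.toAdditiveLeft (Abelianization.lift (QuotientGroup.lift N (fiberCount p) hN))
  let ψ := Finsupp.liftAddHom fun i => zmultiplesHom _ (gen (Function.surjInv hp i))
  have hψ (x : X) : ψ (Finsupp.single (p x) 1) = gen x := by simpa [ψ] using gen_surjInv x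
  have hψφ : ψ.comp φ = .id _ := by
    ext x
    simp [φ, fiberCount, hψ, gen]
  have hφψ : φ.comp ψ = .id _ := by
    ext i
    simp [φ, ψ, fiberCount, gen, Function.surjInv_eq hp]
  let e := AddMonoidHom.toAddEquiv φ ψ hψφ hφψ
  refine ⟨Module.Basis.ofRepr e.toIntLinearEquiv, fun x => ?_⟩
  rw [← Module.Basis.repr_symm_single_one]
  exact hψ x

end FreeGroup

section

variable {G}

open Classical in
noncomputable def conjClassOrSelf (Γ : Set G) (g : G) :
    {C : ConjClasses G // ∃ a ∈ Γ, ConjClasses.mk a = C} ⊕ {g : G // g ∉ Γ} :=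
  if h : g ∈ Γ then .inl ⟨ConjClasses.mk g, g, h, rfl⟩ else .inr ⟨g, h⟩

theorem conjClassOrSelf_surjective (Γ : Set G) : Function.Surjective (conjClassOrSelf Γ) := by
  rintro (⟨C, a, ha, rfl⟩ | ⟨g, hg⟩)
  · exact ⟨a, by simp [conjClassOrSelf, ha]⟩
  · exact ⟨g, by simp [conjClassOrSelf, hg]⟩

theorem conjClassOrSelf_eq_iff {Γ : Set G} {x y : G} :
    conjClassOrSelf Γ x = conjClassOrSelf Γ y ↔ x = y ∨ x ∈ Γ ∧ y ∈ Γ ∧ IsConj x y := by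
  by_cases hx : x ∈ Γ <;> by_cases hy : y ∈ Γ <;>
    simp only [conjClassOrSelf, hx, hy, ↓reduceDIte, Sum.inl.injEq, Sum.inr.injEq, reduceCtorEq,
      Subtype.mk.injEq, ConjClasses.mk_eq_mk_iff_isConj, true_and, false_and, and_false, and_self,
      or_false, iff_or_self, false_iff] <;>
    rintro rfl <;> trivial

theorem RGamma_le_ker_fiberCount (Γ : Set G) (hΓ : ∀ a ∈ Γ, ∀ b : G, b⁻¹ * a * b ∈ Γ) :
    RGamma G Γ ≤ (FreeGroup.fiberCount (conjClassOrSelf Γ)).ker := by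
  refine Subgroup.normalClosure_le_normal (Set.union_subset ?_ ?_)
  · exact fun x hx =>
      Abelianization.commutator_subset_ker _ (Subgroup.commutator_mono le_rfl le_top hx)
  · rintro _ ⟨a, ha, b, rfl⟩
    have hconj : conjClassOrSelf Γ (b⁻¹ * a * b) = conjClassOrSelf Γ a :=
      conjClassOrSelf_eq_iff.mpr (.inr ⟨hΓ a ha b, ha, isConj_iff.mpr ⟨b, by group⟩⟩)
    simp [FreeGroup.fiberCount, hconj]

theorem abelianization_of_mk_of_isConj (Γ : Set G) {a g : G} (ha : a ∈ Γ) (hag : IsConj a g) :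
    Abelianization.of (QuotientGroup.mk (s := RGamma G Γ) (FreeGroup.of g)) =
      Abelianization.of (QuotientGroup.mk (FreeGroup.of a)) := by
  obtain ⟨c, rfl⟩ := isConj_iff.mp hag
  have hrel : FreeGroup.of a * FreeGroup.of c⁻¹ * (FreeGroup.of (c⁻¹⁻¹ * a * c⁻¹))⁻¹ *
      (FreeGroup.of c⁻¹)⁻¹ ∈ RGamma G Γ :=
    Subgroup.subset_normalClosure (Or.inr ⟨a, ha, c⁻¹, rfl⟩)
  have h := congrArg Abelianization.of ((QuotientGroup.eq_one_iff _).mpr hrel)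
  simp only [QuotientGroup.mk_mul, QuotientGroup.mk_inv, map_mul, map_inv, map_one, inv_inv] at h
  rw [mul_right_comm, mul_inv_cancel_right, mul_inv_eq_one] at h
  exact h.symm

end

theorem abelianization_GGamma_free (Γ : Set G)
    (hΓ : ∀ a ∈ Γ, ∀ b : G, b⁻¹ * a * b ∈ Γ) :
    ∃ B : Module.Basis ({C : ConjClasses G // ∃ a ∈ Γ, ConjClasses.mk a = C} ⊕ {g : G // g ∉ Γ}) ℤ
        (Additive (Abelianization (FreeGroup G ⧸ RGamma G Γ))),
      (∀ (a : G) (h : a ∈ Γ),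
        B (Sum.inl ⟨ConjClasses.mk a, ⟨a, h, rfl⟩⟩) =
          Additive.ofMul (Abelianization.of (QuotientGroup.mk (FreeGroup.of a)))) ∧
      (∀ (g : G) (h : g ∉ Γ),
        B (Sum.inr ⟨g, h⟩) =
          Additive.ofMul (Abelianization.of (QuotientGroup.mk (FreeGroup.of g)))) := by
  obtain ⟨B, hB⟩ := FreeGroup.exists_basis_abelianization_quotient (conjClassOrSelf Γ)
    (conjClassOrSelf_surjective Γ) (RGamma G Γ) (RGamma_le_ker_fiberCount Γ hΓ)
    fun x y hxy => by
      obtain rfl | ⟨hx, -, hxy⟩ := conjClassOrSelf_eq_iff.mp hxy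
      · rfl
      · exact (abelianization_of_mk_of_isConj Γ hx hxy).symm
  refine ⟨B, fun a ha => ?_, fun g hg => ?_⟩
  · simpa [conjClassOrSelf, ha] using hB a
  · simpa [conjClassOrSelf, hg] using hB g
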